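/- arXiv:2206.12308 — 5 statements merged into one kernel-verified Lean document; each statement's English description precedes it below -/
import Mathlib

section
/- Assume additionally that each cross-section S_i has a small flow boundary, i.e. Φ_{[−η,η]}(∂^Φ(S_i)) is a null set, and that π is a topological extension of (X,Φ) by the suspension flow (Λ_f,Ψ). Then W is a full set and π restricted to π^{−1}(W) is injective; consequently π : (Λ_f,Ψ) → (X,Φ) is a strongly isomorphic symbolic extension. -/
open Set Topology MeasureTheory

/-- A topological flow. -/
structure IsFlow (X : Type*) [TopologicalSpace X] (φ : ℝ → X → X) : Prop where
  cont : Continuous fun p : X × ℝ => φ p.2 p.1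
  map_zero : ∀ x : X, φ 0 x = x
  map_add : ∀ s t : ℝ, ∀ x : X, φ (s + t) x = φ s (φ t x)

variable {X : Type*}

/-- `Φ_L(A) = {Φ_t(x) : t ∈ L, x ∈ A}`. -/
def flowSet (φ : ℝ → X → X) (L : Set ℝ) (A : Set X) : Set X :=
  {y | ∃ t ∈ L, ∃ x ∈ A, φ t x = y}

/-- A cross-section of injectivity time `η > 0`. -/
def IsCrossSection (φ : ℝ → X → X) (η : ℝ) (S : Set X) : Prop :=
  0 < η ∧ Set.InjOn (fun p : X × ℝ => φ p.2 p.1) (S ×ˢ Set.Icc (-η) η)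

/-- The flow interior (taking `γ = η/2`). -/
def flowInterior [TopologicalSpace X] (φ : ℝ → X → X) (η : ℝ) (U : Set X) : Set X :=
  interior (flowSet φ (Set.Icc (-(η / 2)) (η / 2)) U) ∩ U

/-- The flow boundary. -/
def flowBoundary [TopologicalSpace X] (φ : ℝ → X → X) (η : ℝ) (U : Set X) : Set X :=
  closure U \ flowInterior φ η U

/-- `t` is a return-time sequence for `(x, q)`. -/
def IsRetSeq {N : ℕ} (φ : ℝ → X → X) (S : Fin N → Set X) (β α : ℝ)
    (x : X) (q : ℤ → Fin N) (t : ℤ → ℝ) : Prop :=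
  t 0 = 0 ∧ (∀ i : ℤ, β ≤ t (i + 1) - t i ∧ t (i + 1) - t i ≤ α) ∧
    ∀ i : ℤ, φ (t i) x ∈ S (q i)

/-- The set `G ⋊ Σ^ℤ`. -/
def GJoin {N : ℕ} (φ : ℝ → X → X) (S : Fin N → Set X) (β α : ℝ) :
    Set (X × (ℤ → Fin N)) :=
  {p | p.1 ∈ ⋃ i, S i ∧ ∃ t : ℤ → ℝ, IsRetSeq φ S β α p.1 p.2 t}

/-- First positive hitting time of `T` (`r₁` when `T = G`). -/
noncomputable def hitT (φ : ℝ → X → X) (T : Set X) (x : X) : ℝ :=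
  sInf {t : ℝ | 0 < t ∧ φ t x ∈ T}

/-- Last negative hitting time of `T`. -/
noncomputable def hitTNeg (φ : ℝ → X → X) (T : Set X) (x : X) : ℝ :=
  sSup {t : ℝ | t < 0 ∧ φ t x ∈ T}

/-- Forward return times: `r_0 = 0`, `r_{n+1}(x) = r_n(x) + r_1(Φ_{r_n(x)}(x))`. -/
noncomputable def retPos (φ : ℝ → X → X) (G : Set X) : ℕ → X → ℝ
  | 0 => fun _ => 0
  | n + 1 => fun x => retPos φ G n x + hitT φ G (φ (retPos φ G n x) x)

/-- Backward return times, defined analogously with negative hitting times. -/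
noncomputable def retNeg (φ : ℝ → X → X) (G : Set X) : ℕ → X → ℝ
  | 0 => fun _ => 0
  | n + 1 => fun x => retNeg φ G n x + hitTNeg φ G (φ (retNeg φ G n x) x)

/-- The `i`-th return time `r_i(x)`, `i ∈ ℤ`. -/
noncomputable def retZ (φ : ℝ → X → X) (G : Set X) (i : ℤ) (x : X) : ℝ :=
  if 0 ≤ i then retPos φ G i.toNat x else retNeg φ G (-i).toNat x

/-- `Z = ∪ᵢ ∂^Φ(Sᵢ)`. -/
def Zbd [TopologicalSpace X] {N : ℕ} (φ : ℝ → X → X) (S : Fin N → Set X) (η : ℝ) : Set X :=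
  ⋃ i, flowBoundary φ η (S i)

/-- `W = X \ ∪_{r ∈ ℝ} Φ_r(Z)`. -/
def Wset [TopologicalSpace X] {N : ℕ} (φ : ℝ → X → X) (S : Fin N → Set X) (η : ℝ) : Set X :=
  (⋃ r : ℝ, (fun z => φ r z) '' Zbd φ S η)ᶜ

/-- `V = W ∩ G`. -/
def Vset [TopologicalSpace X] {N : ℕ} (φ : ℝ → X → X) (S : Fin N → Set X) (η : ℝ) : Set X :=
  Wset φ S η ∩ ⋃ i, S i

/-- The itinerary map `Q : V → Σ^ℤ`, `Q_i(x) = j` iff `Φ_{r_i(x)}(x) ∈ S_j` (the sets `S_j`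
being pairwise disjoint, such `j` is unique on `V`; junk value otherwise). -/
noncomputable def Qseq {N : ℕ} (φ : ℝ → X → X) (S : Fin N → Set X) (hN : 0 < N)
    (x : X) : ℤ → Fin N := fun i =>
  @dite _ (∃ j : Fin N, φ (retZ φ (⋃ k, S k) i x) x ∈ S j) (Classical.dec _)
    (fun h => h.choose) (fun _ => ⟨0, hN⟩)

/-- `P : Λ → G` sends `q` to the unique `x` with `(x, q) ∈ G ⋊ Σ^ℤ`. -/
noncomputable def Pmap {N : ℕ} [Nonempty X] (φ : ℝ → X → X) (S : Fin N → Set X)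
    (β α : ℝ) (q : ℤ → Fin N) : X :=
  @dite _ (∃ x : X, (x, q) ∈ GJoin φ S β α) (Classical.dec _)
    (fun h => h.choose) (fun _ => Classical.arbitrary X)

/-- The roof function `f(q) = t₁` where `t` is the return-time sequence of `(P(q), q)`. -/
noncomputable def fmap {N : ℕ} [Nonempty X] (φ : ℝ → X → X) (S : Fin N → Set X)
    (β α : ℝ) (q : ℤ → Fin N) : ℝ :=
  @dite _ (∃ t : ℤ → ℝ, IsRetSeq φ S β α (Pmap φ S β α q) q t) (Classical.dec _)
    (fun h => h.choose 1) (fun _ => 0)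

/-- A set is null if it has zero measure for every `Φ`-invariant Borel probability measure. -/
def IsNullSet [MeasurableSpace X] (φ : ℝ → X → X) (A : Set X) : Prop :=
  ∀ μ : Measure X, IsProbabilityMeasure μ →
    (∀ t : ℝ, Measure.map (φ t) μ = μ) → μ A = 0

/-!
Over a point `v ∈ G` the return times `r(v)` enumerate all visits of the orbit to `G`. For
`q ∈ Λ` this persists in the limit along orbits inside `W`: approximate `q` by itineraries
`Q(vₙ)`; compactness and expansivity force `vₙ → P(q)` and `r(vₙ)` to converge to the
return-time sequence of `(P(q), q)`; and a visit of `P(q)` to `Sⱼ` inside `W` lies in the flow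
interior of `Sⱼ`, so it is shadowed by visits of the `vₙ` at boundedly many indices, one of which
recurs. Hence over `W` a point `Φ_t(P(q))` with `0 ≤ t < f(q)` determines `t` (the time since
the last visit) and then `q` (the itinerary). `W` is full since its complement is covered by
countably many translates `Φ_{mη}` of the null sets `Φ_{[-η,η]}(∂^Φ Sᵢ)`.
-/

open Filter

section Flow

variable [TopologicalSpace X] {φ : ℝ → X → X}

lemma IsFlow.apply_apply (hφ : IsFlow X φ) (s t : ℝ) (x : X) : φ s (φ t x) = φ (s + t) x :=
  (hφ.map_add s t x).symm

lemma IsFlow.apply_neg_apply (hφ : IsFlow X φ) (t : ℝ) (x : X) : φ (-t) (φ t x) = x := by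
  rw [hφ.apply_apply, neg_add_cancel, hφ.map_zero]

lemma IsFlow.injective (hφ : IsFlow X φ) (t : ℝ) : Function.Injective (φ t) :=
  Function.LeftInverse.injective (hφ.apply_neg_apply t)

lemma IsFlow.continuous_apply (hφ : IsFlow X φ) (t : ℝ) : Continuous (φ t) :=
  hφ.cont.comp (continuous_id.prodMk continuous_const)

lemma IsFlow.continuous_orbit (hφ : IsFlow X φ) (x : X) : Continuous fun t => φ t x :=
  hφ.cont.comp (continuous_const.prodMk continuous_id)

lemma IsFlow.tendsto {ι : Type*} {l : Filter ι} (hφ : IsFlow X φ) {y : ι → X} {s : ι → ℝ}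
    {x : X} {t : ℝ} (hy : Tendsto y l (𝓝 x)) (hs : Tendsto s l (𝓝 t)) :
    Tendsto (fun n => φ (s n) (y n)) l (𝓝 (φ t x)) :=
  (hφ.cont.tendsto (x, t)).comp (hy.prodMk_nhds hs)

lemma IsFlow.reverse (hφ : IsFlow X φ) : IsFlow X fun t => φ (-t) where
  cont := hφ.cont.comp (continuous_fst.prodMk continuous_snd.neg)
  map_zero := by simpa using hφ.map_zero
  map_add s t x := by rw [neg_add, hφ.map_add]

lemma IsFlow.subset_flowSet (hφ : IsFlow X φ) {L : Set ℝ} (hL : (0 : ℝ) ∈ L) (A : Set X) :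
    A ⊆ flowSet φ L A :=
  fun x hx => ⟨0, hL, x, hx, hφ.map_zero x⟩

lemma IsCrossSection.eq_of_apply_mem {η : ℝ} {S : Set X} (hS : IsCrossSection φ η S)
    (hφ : IsFlow X φ) {x : X} {s t : ℝ} (hs : φ s x ∈ S) (ht : φ t x ∈ S) (hst : |t - s| ≤ η) :
    s = t := by
  have h := hS.2 (show (φ s x, t - s) ∈ S ×ˢ Icc (-η) η from ⟨hs, abs_le.mp hst⟩)
    (show (φ t x, (0 : ℝ)) ∈ S ×ˢ Icc (-η) η from ⟨ht, neg_nonpos.mpr hS.1.le, hS.1.le⟩)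
    (by simp [hφ.apply_apply])
  linarith [congrArg Prod.snd h]

end Flow

section NullSet

variable [MeasurableSpace X] {φ : ℝ → X → X}

lemma IsNullSet.mono {A B : Set X} (hB : IsNullSet φ B) (hAB : A ⊆ B) : IsNullSet φ A :=
  fun μ hμ hinv => measure_mono_null hAB (hB μ hμ hinv)

lemma IsNullSet.iUnion {ι : Type*} [Countable ι] {A : ι → Set X} (h : ∀ i, IsNullSet φ (A i)) :
    IsNullSet φ (⋃ i, A i) :=
  fun μ hμ hinv => measure_iUnion_null fun i => h i μ hμ hinv

lemma IsNullSet.preimage [TopologicalSpace X] [BorelSpace X] (hφ : IsFlow X φ)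
    {A : Set X} (hA : IsNullSet φ A) (t : ℝ) : IsNullSet φ (φ t ⁻¹' A) := by
  intro μ hμ hinv
  have h := Measure.le_map_apply (μ := μ) (hφ.continuous_apply t).aemeasurable A
  rwa [hinv t, hA μ hμ hinv, nonpos_iff_eq_zero] at h

end NullSet

structure IsReturnSection [TopologicalSpace X] (φ : ℝ → X → X) (G : Set X) (β α : ℝ) : Prop where
  flow : IsFlow X φ
  isClosed : IsClosed G
  pos : 0 < β
  sep : ∀ x s t, φ s x ∈ G → φ t x ∈ G → s < t → β < t - s
  dense : ∀ x s, ∃ t ∈ Icc s (s + α), φ t x ∈ G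

lemma isReturnSection_iUnion [TopologicalSpace X] {φ : ℝ → X → X} {N : ℕ} {S : Fin N → Set X}
    {η β α : ℝ} (hφ : IsFlow X φ) (hS : ∀ i, IsClosed (S i))
    (hcs : ∀ i, IsCrossSection φ η (S i)) (hβ : 0 < β) (hβη : β ≤ η)
    (hβdisj : Pairwise (Function.onFun Disjoint fun i => flowSet φ (Icc 0 β) (S i)))
    (hcov : flowSet φ (Icc 0 α) (⋃ i, S i) = univ) : IsReturnSection φ (⋃ i, S i) β α where
  flow := hφ
  isClosed := isClosed_iUnion_of_finite hS
  pos := hβ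
  sep x s t hs ht hst := by
    by_contra! hle
    obtain ⟨i, hi⟩ := mem_iUnion.mp hs
    obtain ⟨j, hj⟩ := mem_iUnion.mp ht
    rcases eq_or_ne i j with rfl | hij
    · have := (hcs i).eq_of_apply_mem hφ hi hj (by rw [abs_of_pos (sub_pos.2 hst)]; linarith)
      linarith
    · have hmem : φ t x ∈ flowSet φ (Icc 0 β) (S i) :=
        ⟨t - s, ⟨by linarith, hle⟩, _, hi, by rw [hφ.apply_apply, sub_add_cancel]⟩
      exact (hβdisj hij).ne_of_mem hmem (hφ.subset_flowSet (left_mem_Icc.2 hβ.le) _ hj) rfl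
  dense x s := by
    have hx : φ (s + α) x ∈ flowSet φ (Icc 0 α) (⋃ i, S i) := hcov ▸ mem_univ _
    obtain ⟨τ, hτ, g, hg, hgx⟩ := hx
    refine ⟨s + α - τ, ⟨by linarith [hτ.2], by linarith [hτ.1]⟩, ?_⟩
    rwa [← hφ.apply_neg_apply τ g, hgx, hφ.apply_apply, neg_add_eq_sub] at hg

lemma isLeast_sInf_pos {A : Set ℝ} {β : ℝ} (hA : IsClosed A) (hβ : 0 < β)
    (hsep : ∀ s ∈ A, ∀ t ∈ A, s < t → β < t - s) (hne : ∃ t ∈ A, 0 < t) :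
    IsLeast {t | 0 < t ∧ t ∈ A} (sInf {t | 0 < t ∧ t ∈ A}) := by
  set P := {t | 0 < t ∧ t ∈ A}
  have hP : P.Nonempty := by
    obtain ⟨t, htA, ht⟩ := hne
    exact ⟨t, ht, htA⟩
  have hbdd : BddBelow P := ⟨0, fun t ht => ht.1.le⟩
  have hPA : P ⊆ Ici 0 ∩ A := fun t ht => ⟨ht.1.le, ht.2⟩
  have hmem : sInf P ∈ Ici 0 ∩ A := closure_minimal hPA (isClosed_Ici.inter hA) (csInf_mem_closure hP hbdd)
  refine ⟨⟨lt_of_le_of_ne hmem.1 fun h0 => ?_, hmem.2⟩, fun t ht => csInf_le hbdd ht⟩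
  obtain ⟨a, ha, haβ⟩ := exists_lt_of_csInf_lt hP (show sInf P < β by rw [← h0]; exact hβ)
  linarith [hsep 0 (h0 ▸ hmem.2) a ha.2 ha.1]

lemma hitTNeg_eq_neg_hitT (φ : ℝ → X → X) (G : Set X) (x : X) :
    hitTNeg φ G x = -hitT (fun t => φ (-t)) G x := by
  rw [hitTNeg, hitT, ← Real.sSup_neg]
  congr 1
  ext t
  simp

lemma retNeg_eq_neg_retPos (φ : ℝ → X → X) (G : Set X) (n : ℕ) (x : X) :
    retNeg φ G n x = -retPos (fun t => φ (-t)) G n x := by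
  induction n with
  | zero => simp [retNeg, retPos]
  | succ n ih => simp only [retNeg, retPos, ih, hitTNeg_eq_neg_hitT, neg_add]

lemma retZ_zero (φ : ℝ → X → X) (G : Set X) (x : X) : retZ φ G 0 x = 0 := by
  simp [retZ, retPos]

lemma retZ_natCast (φ : ℝ → X → X) (G : Set X) (n : ℕ) (x : X) :
    retZ φ G n x = retPos φ G n x := by
  simp [retZ]

lemma retZ_neg_natCast (φ : ℝ → X → X) (G : Set X) (n : ℕ) (x : X) :
    retZ φ G (-n) x = -retPos (fun t => φ (-t)) G n x := by
  rcases n with _ | n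
  · simp [retZ, retPos]
  · rw [retZ, if_neg (by omega), neg_neg, Int.toNat_natCast, retNeg_eq_neg_retPos]

namespace IsReturnSection

variable [TopologicalSpace X] {φ : ℝ → X → X} {G : Set X} {β α : ℝ}

lemma reverse (hG : IsReturnSection φ G β α) : IsReturnSection (fun t => φ (-t)) G β α where
  flow := hG.flow.reverse
  isClosed := hG.isClosed
  pos := hG.pos
  sep x s t hs ht hst := by linarith [hG.sep x (-t) (-s) ht hs (neg_lt_neg hst)]
  dense x s := by
    obtain ⟨t, ht, htG⟩ := hG.dense x (-s - α)
    exact ⟨-t, ⟨by linarith [ht.2], by linarith [ht.1]⟩, by rwa [neg_neg]⟩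

lemma isLeast_hitT (hG : IsReturnSection φ G β α) (x : X) :
    IsLeast {t | 0 < t ∧ φ t x ∈ G} (hitT φ G x) := by
  obtain ⟨t, ht, htG⟩ := hG.dense x 1
  exact isLeast_sInf_pos (hG.isClosed.preimage (hG.flow.continuous_orbit x)) hG.pos
    (fun s hs t ht => hG.sep x s t hs ht) ⟨t, htG, by linarith [ht.1]⟩

lemma hitT_mem_Ioc (hG : IsReturnSection φ G β α) {x : X} (hx : x ∈ G) :
    hitT φ G x ∈ Ioc β α := by
  obtain ⟨⟨hpos, hmem⟩, hleast⟩ := hG.isLeast_hitT x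
  refine ⟨by simpa using hG.sep x 0 _ (by rwa [hG.flow.map_zero]) hmem hpos,
    le_of_forall_pos_le_add fun ε hε => ?_⟩
  obtain ⟨t, ht, htG⟩ := hG.dense x ε
  linarith [hleast ⟨hε.trans_le ht.1, htG⟩, ht.2]

lemma apply_retPos_succ (hG : IsReturnSection φ G β α) (n : ℕ) (x : X) :
    φ (retPos φ G (n + 1) x) x = φ (hitT φ G (φ (retPos φ G n x) x)) (φ (retPos φ G n x) x) := by
  rw [hG.flow.apply_apply, retPos, add_comm]

lemma apply_retPos_mem (hG : IsReturnSection φ G β α) {x : X} (hx : x ∈ G) (n : ℕ) :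
    φ (retPos φ G n x) x ∈ G := by
  cases n with
  | zero => simpa [retPos, hG.flow.map_zero] using hx
  | succ n => rw [hG.apply_retPos_succ]; exact (hG.isLeast_hitT _).1.2

lemma retPos_succ_sub_mem_Ioc (hG : IsReturnSection φ G β α) {x : X} (hx : x ∈ G) (n : ℕ) :
    retPos φ G (n + 1) x - retPos φ G n x ∈ Ioc β α := by
  rw [retPos, add_sub_cancel_left]
  exact hG.hitT_mem_Ioc (hG.apply_retPos_mem hx n)

lemma exists_retPos_eq (hG : IsReturnSection φ G β α) {x : X} (hx : x ∈ G) {t : ℝ}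
    (ht₀ : 0 ≤ t) (ht : φ t x ∈ G) : ∃ n, retPos φ G n x = t := by
  have below : ∀ n : ℕ, t ≤ retPos φ G n x → ∃ k, retPos φ G k x = t := by
    intro n
    induction n with
    | zero => exact fun h => ⟨0, le_antisymm ht₀ h⟩
    | succ n ih =>
      intro h
      rcases le_or_gt t (retPos φ G n x) with h' | h'
      · exact ih h'
      · refine ⟨n + 1, le_antisymm ?_ h⟩
        have := (hG.isLeast_hitT (φ (retPos φ G n x) x)).2
          ⟨sub_pos.2 h', by rwa [hG.flow.apply_apply, sub_add_cancel]⟩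
        rw [retPos]
        linarith
  have linear : ∀ n : ℕ, n * β ≤ retPos φ G n x := by
    intro n
    induction n with
    | zero => simp [retPos]
    | succ n ih => push_cast; linarith [(hG.retPos_succ_sub_mem_Ioc hx n).1]
  obtain ⟨n, hn⟩ := exists_nat_ge (t / β)
  exact below n (((div_le_iff₀ hG.pos).1 hn).trans (linear n))

lemma retZ_succ_sub_mem_Ioc (hG : IsReturnSection φ G β α) {x : X} (hx : x ∈ G) (i : ℤ) :
    retZ φ G (i + 1) x - retZ φ G i x ∈ Ioc β α := by
  have natCast (n : ℕ) : retZ φ G (n + 1) x - retZ φ G n x ∈ Ioc β α := by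
    rw [← Nat.cast_succ, retZ_natCast, retZ_natCast]
    exact hG.retPos_succ_sub_mem_Ioc hx n
  obtain ⟨n, rfl | rfl⟩ := Int.eq_nat_or_neg i
  · exact natCast n
  rcases n with _ | n
  · simpa using natCast 0
  · rw [show -((n + 1 : ℕ) : ℤ) + 1 = -(n : ℤ) by push_cast; ring, retZ_neg_natCast,
      retZ_neg_natCast, neg_sub_neg]
    exact hG.reverse.retPos_succ_sub_mem_Ioc hx n

lemma apply_retZ_mem (hG : IsReturnSection φ G β α) {x : X} (hx : x ∈ G) (i : ℤ) :
    φ (retZ φ G i x) x ∈ G := by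
  obtain ⟨n, rfl | rfl⟩ := Int.eq_nat_or_neg i
  · rw [retZ_natCast]
    exact hG.apply_retPos_mem hx n
  · rw [retZ_neg_natCast]
    exact hG.reverse.apply_retPos_mem hx n

lemma exists_retZ_eq (hG : IsReturnSection φ G β α) {x : X} (hx : x ∈ G) {t : ℝ}
    (ht : φ t x ∈ G) : ∃ i, retZ φ G i x = t := by
  rcases le_total 0 t with h | h
  · obtain ⟨n, hn⟩ := hG.exists_retPos_eq hx h ht
    exact ⟨n, by rw [retZ_natCast, hn]⟩
  · obtain ⟨n, hn⟩ := hG.reverse.exists_retPos_eq hx (neg_nonneg.2 h) (by simpa using ht)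
    exact ⟨-n, by rw [retZ_neg_natCast, hn, neg_neg]⟩

end IsReturnSection

lemma Int.funext_of_succ_iff {α : Type*} {f g : ℤ → α} (h₀ : f 0 = g 0)
    (h : ∀ i, f i = g i ↔ f (i + 1) = g (i + 1)) : f = g := by
  funext i
  induction i using Int.induction_on with
  | zero => exact h₀
  | succ i ih => exact (h i).1 ih
  | pred i ih => exact (h _).2 (by rwa [sub_add_cancel])

lemma StrictMono.eq_of_range_eq_of_apply_zero {α : Type*} [LinearOrder α] {f g : ℤ → α}
    (hf : StrictMono f) (hg : StrictMono g) (hfg : range f = range g) (h₀ : f 0 = g 0) :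
    f = g := by
  have succ_le : ∀ {f g : ℤ → α}, StrictMono f → StrictMono g → range f ⊆ range g →
      ∀ i, f i = g i → g (i + 1) ≤ f (i + 1) := by
    intro f g hf hg hfg i hi
    obtain ⟨m, hm⟩ := hfg ⟨i + 1, rfl⟩
    have : g i < g m := by rw [hm, ← hi]; exact hf (lt_add_one i)
    rw [← hm]
    exact hg.monotone (hg.lt_iff_lt.1 this)
  have le_pred : ∀ {f g : ℤ → α}, StrictMono f → StrictMono g → range f ⊆ range g →
      ∀ i, f (i + 1) = g (i + 1) → f i ≤ g i := by
    intro f g hf hg hfg i hi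
    obtain ⟨m, hm⟩ := hfg ⟨i, rfl⟩
    have : g m < g (i + 1) := by rw [hm, ← hi]; exact hf (lt_add_one i)
    rw [← hm]
    exact hg.monotone (Int.lt_add_one_iff.1 (hg.lt_iff_lt.1 this))
  refine Int.funext_of_succ_iff h₀ fun i => ⟨fun hi => ?_, fun hi => ?_⟩
  · exact le_antisymm (succ_le hg hf hfg.ge i hi.symm) (succ_le hf hg hfg.le i hi)
  · exact le_antisymm (le_pred hf hg hfg.le i hi) (le_pred hg hf hfg.ge i hi.symm)

section Gaps

variable {T : ℤ → ℝ} {β α : ℝ}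

lemma sub_mem_Icc_of_succ_sub_mem_Icc (hT : ∀ i, T (i + 1) - T i ∈ Icc β α) {i j : ℤ}
    (hij : i ≤ j) : T j - T i ∈ Icc (β * (j - i)) (α * (j - i)) := by
  induction j, hij using Int.leInduction with
  | base => simp
  | succ j _ ih =>
    have h := hT j
    push_cast
    constructor <;> linarith [ih.1, ih.2, h.1, h.2]

lemma abs_mem_Icc_of_succ_sub_mem_Icc (hT : ∀ i, T (i + 1) - T i ∈ Icc β α) (h₀ : T 0 = 0)
    (hβ : 0 ≤ β) (i : ℤ) : |T i| ∈ Icc (β * |(i : ℝ)|) (α * |(i : ℝ)|) := by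
  rcases le_total 0 i with hi | hi
  · have h := sub_mem_Icc_of_succ_sub_mem_Icc hT hi
    have hi' : (0 : ℝ) ≤ i := by exact_mod_cast hi
    simp only [h₀, Int.cast_zero, sub_zero] at h
    rwa [abs_of_nonneg hi', abs_of_nonneg ((mul_nonneg hβ hi').trans h.1)]
  · have h := sub_mem_Icc_of_succ_sub_mem_Icc hT hi
    have hi' : (i : ℝ) ≤ 0 := by exact_mod_cast hi
    simp only [h₀, Int.cast_zero, zero_sub] at h
    rwa [abs_of_nonpos hi', abs_of_nonpos (by linarith [mul_nonneg hβ (neg_nonneg.2 hi'), h.1])]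

end Gaps

namespace IsRetSeq

variable {φ : ℝ → X → X} {N : ℕ} {S : Fin N → Set X} {β α : ℝ} {x : X} {q : ℤ → Fin N}
  {T : ℤ → ℝ}

lemma mem_zero [TopologicalSpace X] (hφ : IsFlow X φ) (hT : IsRetSeq φ S β α x q T) :
    x ∈ S (q 0) := by
  simpa [hT.1, hφ.map_zero] using hT.2.2 0

lemma apply_mem_iUnion (hT : IsRetSeq φ S β α x q T) (i : ℤ) : φ (T i) x ∈ ⋃ k, S k :=
  mem_iUnion.2 ⟨_, hT.2.2 i⟩

lemma strictMono (hT : IsRetSeq φ S β α x q T) (hβ : 0 < β) : StrictMono T :=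
  strictMono_int_of_lt_succ fun i => by linarith [(hT.2.1 i).1]

lemma tendsto_atTop (hT : IsRetSeq φ S β α x q T) (hβ : 0 < β) :
    Tendsto (fun n : ℕ => T n) atTop atTop := by
  refine tendsto_atTop_mono (fun n => ?_) (tendsto_natCast_atTop_atTop.const_mul_atTop hβ)
  simpa [hT.1] using (sub_mem_Icc_of_succ_sub_mem_Icc hT.2.1 (Int.natCast_nonneg n)).1

lemma tendsto_atBot (hT : IsRetSeq φ S β α x q T) (hβ : 0 < β) :
    Tendsto (fun n : ℕ => T (-n)) atTop atBot := by
  refine tendsto_atBot_mono (fun n => ?_)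
    (tendsto_neg_atBot_iff.2 (tendsto_natCast_atTop_atTop.const_mul_atTop hβ))
  have := (sub_mem_Icc_of_succ_sub_mem_Icc hT.2.1 (neg_nonpos.2 (Int.natCast_nonneg n))).1
  simp only [hT.1, Int.cast_zero, Int.cast_neg, Int.cast_natCast] at this
  linarith

lemma unique [TopologicalSpace X] {η : ℝ} {U : ℤ → ℝ} (hT : IsRetSeq φ S β α x q T)
    (hU : IsRetSeq φ S β α x q U) (hφ : IsFlow X φ) (hcs : ∀ i, IsCrossSection φ η (S i))
    (hη : α - β ≤ η) : T = U := by
  refine Int.funext_of_succ_iff (hT.1.trans hU.1.symm) fun i => ⟨fun h => ?_, fun h => ?_⟩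
  all_goals
    refine (hcs _).eq_of_apply_mem hφ (hT.2.2 _) (hU.2.2 _) (abs_le.2 ⟨?_, ?_⟩) <;>
      linarith [hT.2.1 i, hU.2.1 i]

end IsRetSeq

def IsExpansiveConstant [Dist X] (φ : ℝ → X → X) (η α : ℝ) : Prop :=
  ∀ (t u : ℤ → ℝ) (x y : X), t 0 = 0 → u 0 = 0 →
    (∀ i : ℤ, 0 < t (i + 1) - t i ∧ t (i + 1) - t i ≤ α) →
    (∀ i : ℤ, |u (i + 1) - u i| ≤ α) →
    Tendsto (fun n : ℕ => t (n : ℤ)) atTop atTop →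
    Tendsto (fun n : ℕ => t (-(n : ℤ))) atTop atBot →
    (∀ i : ℤ, dist (φ (t i) x) (φ (u i) y) ≤ α) →
    ∃ s : ℝ, |s| ≤ η ∧ y = φ s x

section Itineraries

variable {φ : ℝ → X → X} {N : ℕ} {S : Fin N → Set X} {η β α : ℝ} {q : ℤ → Fin N}

lemma apply_retZ_mem_Qseq (hN : 0 < N) {x : X} {i : ℤ}
    (h : φ (retZ φ (⋃ k, S k) i x) x ∈ ⋃ k, S k) :
    φ (retZ φ (⋃ k, S k) i x) x ∈ S (Qseq φ S hN x i) := by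
  have h' := mem_iUnion.1 h
  rw [Qseq, dif_pos h']
  exact h'.choose_spec

lemma IsReturnSection.isRetSeq_retZ [TopologicalSpace X]
    (hG : IsReturnSection φ (⋃ k, S k) β α) (hN : 0 < N) {x : X} (hx : x ∈ ⋃ k, S k) :
    IsRetSeq φ S β α x (Qseq φ S hN x) fun i => retZ φ (⋃ k, S k) i x :=
  ⟨retZ_zero φ _ x, fun i => Ioc_subset_Icc_self (hG.retZ_succ_sub_mem_Ioc hx i),
    fun i => apply_retZ_mem_Qseq hN (hG.apply_retZ_mem hx i)⟩

lemma IsRetSeq.eq_of_isRetSeq [MetricSpace X] [CompactSpace X] {x y : X} {T U : ℤ → ℝ}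
    (hT : IsRetSeq φ S β α x q T) (hU : IsRetSeq φ S β α y q U) (hφ : IsFlow X φ)
    (hcs : ∀ i, IsCrossSection φ η (S i)) (hdiam : ∀ i, Metric.diam (S i) ≤ α)
    (hα : IsExpansiveConstant φ η α) (hβ : 0 < β) : y = x := by
  obtain ⟨s, hs, rfl⟩ := hα T U x y hT.1 hU.1
    (fun i => ⟨by linarith [(hT.2.1 i).1], (hT.2.1 i).2⟩)
    (fun i => abs_le.2 ⟨by linarith [(hU.2.1 i).1, (hU.2.1 i).2], (hU.2.1 i).2⟩)
    (hT.tendsto_atTop hβ) (hT.tendsto_atBot hβ)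
    (fun i => (Metric.dist_le_diam_of_mem Metric.isBounded_of_compactSpace
      (hT.2.2 i) (hU.2.2 i)).trans (hdiam _))
  have h₀ : φ 0 x ∈ S (q 0) := by simpa [hT.1] using hT.2.2 0
  rw [← (hcs _).eq_of_apply_mem hφ h₀ (hU.mem_zero hφ) (by simpa using hs), hφ.map_zero]

lemma isRetSeq_of_tendsto [TopologicalSpace X] {ι : Type*} {l : Filter ι} [l.NeBot]
    {xs : ι → X} {qs : ι → ℤ → Fin N} {Ts : ι → ℤ → ℝ} {x : X} {T : ℤ → ℝ}
    (h : ∀ n, IsRetSeq φ S β α (xs n) (qs n) (Ts n)) (hφ : IsFlow X φ)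
    (hS : ∀ i, IsClosed (S i)) (hx : Tendsto xs l (𝓝 x)) (hq : Tendsto qs l (𝓝 q))
    (hT : Tendsto Ts l (𝓝 T)) : IsRetSeq φ S β α x q T := by
  have hTi (i : ℤ) : Tendsto (fun n => Ts n i) l (𝓝 (T i)) := tendsto_pi_nhds.1 hT i
  refine ⟨tendsto_nhds_unique ((hTi 0).congr fun n => (h n).1) tendsto_const_nhds,
    fun i => isClosed_Icc.mem_of_tendsto ((hTi (i + 1)).sub (hTi i))
      (Eventually.of_forall fun n => (h n).2.1 i), fun i => ?_⟩
  have hqi : ∀ᶠ n in l, qs n i = q i := by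
    simpa [nhds_discrete] using tendsto_pi_nhds.1 hq i
  exact (hS (q i)).mem_of_tendsto (hφ.tendsto hx (hTi i))
    (hqi.mono fun n hn => hn ▸ (h n).2.2 i)

lemma exists_tendsto_retZ_of_mem_closure [TopologicalSpace X] [FirstCountableTopology X]
    [CompactSpace X]
    (hG : IsReturnSection φ (⋃ k, S k) β α) (hS : ∀ i, IsClosed (S i)) (hN : 0 < N)
    {A : Set X} (hA : A ⊆ ⋃ k, S k) (hq : q ∈ closure (Qseq φ S hN '' A)) :
    ∃ x u, IsRetSeq φ S β α x q u ∧ ∃ v : ℕ → X, (∀ n, v n ∈ ⋃ k, S k) ∧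
      Tendsto (fun n => (v n, fun i => retZ φ (⋃ k, S k) i (v n))) atTop (𝓝 (x, u)) := by
  obtain ⟨p, hp, hpq⟩ := mem_closure_iff_seq_limit.1 hq
  choose w hwA hwp using hp
  have hw (n : ℕ) := hG.isRetSeq_retZ hN (hA (hwA n))
  have hK : IsCompact ((univ : Set X) ×ˢ univ.pi fun i : ℤ => Icc (-(α * |(i : ℝ)|)) (α * |(i : ℝ)|)) :=
    isCompact_univ.prod (isCompact_univ_pi fun _ => isCompact_Icc)
  obtain ⟨⟨x, u⟩, -, ψ, hψ, hlim⟩ :=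
    hK.tendsto_subseq (x := fun n => (w n, fun i => retZ φ (⋃ k, S k) i (w n))) fun n =>
      ⟨mem_univ _, fun i _ =>
        abs_le.1 (abs_mem_Icc_of_succ_sub_mem_Icc (hw n).2.1 (hw n).1 hG.pos.le i).2⟩
  refine ⟨x, u, isRetSeq_of_tendsto (fun n => hw (ψ n)) hG.flow hS
    ((continuous_fst.tendsto _).comp hlim) ?_ ((continuous_snd.tendsto _).comp hlim),
    w ∘ ψ, fun n => hA (hwA _), hlim⟩
  exact (hpq.comp hψ.tendsto_atTop).congr fun n => (hwp (ψ n)).symm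

end Itineraries

namespace IsReturnSection

variable [TopologicalSpace X] {φ : ℝ → X → X} {G : Set X} {β α : ℝ}

lemma exists_retZ_mem_of_mem_flowSet (hG : IsReturnSection φ G β α) {x : X} (hx : x ∈ G)
    {S : Set X} (hSG : S ⊆ G) {r δ : ℝ} (h : φ r x ∈ flowSet φ (Icc (-δ) δ) S) :
    ∃ k ∈ Finset.Icc (-⌈(|r| + δ) / β⌉) ⌈(|r| + δ) / β⌉,
      (retZ φ G k x, φ (retZ φ G k x) x) ∈ Icc (r - δ) (r + δ) ×ˢ S := by
  obtain ⟨ρ, hρ, z, hz, hzr⟩ := h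
  have hzx : φ (r - ρ) x = z := by
    rw [← hG.flow.apply_neg_apply ρ z, hzr, hG.flow.apply_apply, neg_add_eq_sub]
  obtain ⟨k, hk⟩ := hG.exists_retZ_eq hx (hzx ▸ hSG hz)
  have hkβ : β * |(k : ℝ)| ≤ |r| + δ := calc
    β * |(k : ℝ)| ≤ |retZ φ G k x| := (abs_mem_Icc_of_succ_sub_mem_Icc
      (T := fun i => retZ φ G i x) (fun i => Ioc_subset_Icc_self (hG.retZ_succ_sub_mem_Ioc hx i)) (retZ_zero φ G x)
      hG.pos.le k).1
    _ = |r - ρ| := by rw [hk]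
    _ ≤ |r| + δ := (abs_sub _ _).trans (by gcongr; exact abs_le.2 hρ)
  have hkK : ((|k| : ℤ) : ℝ) ≤ ⌈(|r| + δ) / β⌉ := by
    rw [Int.cast_abs]
    exact ((le_div_iff₀' hG.pos).2 hkβ).trans (Int.le_ceil _)
  refine ⟨k, Finset.mem_Icc.2 (abs_le.1 (by exact_mod_cast hkK)), ⟨?_, ?_⟩, ?_⟩
  · rw [hk]; linarith [hρ.2]
  · rw [hk]; linarith [hρ.1]
  · rw [hk, hzx]; exact hz

lemma exists_eq_of_tendsto_retZ (hG : IsReturnSection φ G β α) {η : ℝ} {S : Set X}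
    (hSG : S ⊆ G) (hS : IsClosed S) (hcs : IsCrossSection φ η S) {v : ℕ → X}
    (hv : ∀ n, v n ∈ G) {x : X} {u : ℤ → ℝ}
    (hlim : Tendsto (fun n => (v n, fun i => retZ φ G i (v n))) atTop (𝓝 (x, u))) {r : ℝ}
    (hr : φ r x ∈ S) (hint : φ r x ∈ interior (flowSet φ (Icc (-(η / 2)) (η / 2)) S)) :
    ∃ k, u k = r := by
  have hvx := (continuous_fst.tendsto _).comp hlim
  have hu (k : ℤ) : Tendsto (fun n => retZ φ G k (v n)) atTop (𝓝 (u k)) :=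
    tendsto_pi_nhds.1 ((continuous_snd.tendsto _).comp hlim) k
  have hnear := ((hG.flow.tendsto hvx tendsto_const_nhds).eventually
    (isOpen_interior.mem_nhds hint)).mono fun n hn =>
      hG.exists_retZ_mem_of_mem_flowSet (hv n) hSG (interior_subset hn)
  -- finitely many indices are candidates, so one of them is chosen infinitely often
  obtain ⟨k, -, hk⟩ := (Finset.frequently_exists _).1 hnear.frequently
  obtain ⟨hkr, hkS⟩ := (isClosed_Icc.prod hS).mem_of_frequently_of_tendsto hk
    ((hu k).prodMk_nhds (hG.flow.tendsto hvx (hu k)))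
  exact ⟨k, hcs.eq_of_apply_mem hG.flow hkS hr
    (abs_le.2 ⟨by linarith [hkr.2, hcs.1], by linarith [hkr.1, hcs.1]⟩)⟩

end IsReturnSection

section FlowBoundary

variable [TopologicalSpace X] {φ : ℝ → X → X} {N : ℕ} {S : Fin N → Set X} {η : ℝ}

lemma IsFlow.apply_mem_Wset (hφ : IsFlow X φ) {x : X} (hx : x ∈ Wset φ S η) (t : ℝ) :
    φ t x ∈ Wset φ S η := by
  rintro ⟨_, ⟨r, rfl⟩, z, hz, hzx⟩
  refine hx (mem_iUnion.2 ⟨-t + r, z, hz, ?_⟩)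
  change φ r z = φ t x at hzx
  change φ (-t + r) z = x
  rw [← hφ.apply_apply, hzx, hφ.apply_neg_apply]

lemma mem_interior_flowSet_of_mem_Wset (hφ : IsFlow X φ) {y : X} (hy : y ∈ Wset φ S η)
    {i : Fin N} (hyS : y ∈ S i) : y ∈ interior (flowSet φ (Icc (-(η / 2)) (η / 2)) (S i)) := by
  by_contra h
  exact hy (mem_iUnion.2 ⟨0, y, mem_iUnion.2 ⟨i, subset_closure hyS, fun h' => h h'.1⟩,
    hφ.map_zero y⟩)

lemma isNullSet_compl_Wset [MeasurableSpace X] [BorelSpace X] (hφ : IsFlow X φ) (hη : 0 < η)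
    (hsmall : ∀ i, IsNullSet φ (flowSet φ (Icc (-η) η) (flowBoundary φ η (S i)))) :
    IsNullSet φ (Wset φ S η)ᶜ := by
  refine (IsNullSet.iUnion fun m : ℤ => IsNullSet.iUnion fun i =>
    (hsmall i).preimage hφ (-(m • η))).mono ?_
  rw [Wset, compl_compl]
  rintro _ ⟨_, ⟨r, rfl⟩, z, hz, rfl⟩
  obtain ⟨i, hi⟩ := mem_iUnion.1 hz
  obtain ⟨m, hm, -⟩ := existsUnique_sub_zsmul_mem_Ico hη r 0
  refine mem_iUnion₂.2 ⟨m, i, r - m • η, ⟨by linarith [hm.1], by linarith [hm.2]⟩, z, hi, ?_⟩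
  change φ (r - m • η) z = φ (-(m • η)) (φ r z)
  rw [hφ.apply_apply, neg_add_eq_sub]

end FlowBoundary

namespace IsRetSeq

variable {φ : ℝ → X → X} {N : ℕ} {S : Fin N → Set X} {η β α : ℝ} {x : X} {q : ℤ → Fin N}
  {T : ℤ → ℝ}

lemma range_eq_of_apply_mem_Wset [MetricSpace X] [CompactSpace X] (hT : IsRetSeq φ S β α x q T)
    (hG : IsReturnSection φ (⋃ k, S k) β α) (hS : ∀ i, IsClosed (S i))
    (hcs : ∀ i, IsCrossSection φ η (S i)) (hdiam : ∀ i, Metric.diam (S i) ≤ α)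
    (hα : IsExpansiveConstant φ η α) (hη : α - β ≤ η) (hN : 0 < N)
    (hq : q ∈ closure (Qseq φ S hN '' Vset φ S η)) {s : ℝ} (hW : φ s x ∈ Wset φ S η) :
    range T = {r | φ r x ∈ ⋃ k, S k} := by
  obtain ⟨y, u, hu, v, hv, hlim⟩ :=
    exists_tendsto_retZ_of_mem_closure hG hS hN inter_subset_right hq
  obtain rfl := hT.eq_of_isRetSeq hu hG.flow hcs hdiam hα hG.pos
  obtain rfl := hu.unique hT hG.flow hcs hη
  refine Subset.antisymm (range_subset_iff.2 hT.apply_mem_iUnion) fun r hr => ?_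
  obtain ⟨j, hj⟩ := mem_iUnion.1 hr
  have hWr : φ r y ∈ Wset φ S η := by
    simpa [hG.flow.apply_apply] using hG.flow.apply_mem_Wset hW (r - s)
  exact hG.exists_eq_of_tendsto_retZ (subset_iUnion S j) (hS j) (hcs j) hv hlim hj
    (mem_interior_flowSet_of_mem_Wset hG.flow hWr hj)

lemma le_of_apply_eq [TopologicalSpace X] (hT : IsRetSeq φ S β α x q T) (hφ : IsFlow X φ)
    (hβ : 0 < β) (hrange : range T = {r | φ r x ∈ ⋃ k, S k}) {y : X} (hy : y ∈ ⋃ k, S k)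
    {s t : ℝ} (ht : t < T 1) (hs : 0 ≤ s) (h : φ t x = φ s y) : t ≤ s := by
  by_contra! hst
  have hvisit : φ (t - s) x = y := by
    rw [sub_eq_neg_add, ← hφ.apply_apply, h, hφ.apply_neg_apply]
  obtain ⟨m, hm⟩ : t - s ∈ range T := hrange ▸ (hvisit ▸ hy : φ (t - s) x ∈ ⋃ k, S k)
  have h₀ : 0 < m := (hT.strictMono hβ).lt_iff_lt.1 (by rw [hT.1, hm]; linarith)
  have h₁ : m < 1 := (hT.strictMono hβ).lt_iff_lt.1 (by rw [hm]; linarith)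
  omega

lemma eq_of_apply_eq [TopologicalSpace X] {x₁ x₂ : X} {q₁ q₂ : ℤ → Fin N} {T₁ T₂ : ℤ → ℝ}
    {t₁ t₂ : ℝ} (hT₁ : IsRetSeq φ S β α x₁ q₁ T₁) (hT₂ : IsRetSeq φ S β α x₂ q₂ T₂)
    (hφ : IsFlow X φ) (hβ : 0 < β) (hdisj : Pairwise (Function.onFun Disjoint S))
    (hr₁ : range T₁ = {r | φ r x₁ ∈ ⋃ k, S k}) (hr₂ : range T₂ = {r | φ r x₂ ∈ ⋃ k, S k})
    (ht₁ : 0 ≤ t₁) (ht₁' : t₁ < T₁ 1) (ht₂ : 0 ≤ t₂) (ht₂' : t₂ < T₂ 1)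
    (h : φ t₁ x₁ = φ t₂ x₂) : q₁ = q₂ ∧ t₁ = t₂ := by
  obtain rfl : t₁ = t₂ := le_antisymm
    (hT₁.le_of_apply_eq hφ hβ hr₁ (mem_iUnion.2 ⟨_, hT₂.mem_zero hφ⟩) ht₁' ht₂ h)
    (hT₂.le_of_apply_eq hφ hβ hr₂ (mem_iUnion.2 ⟨_, hT₁.mem_zero hφ⟩) ht₂' ht₁ h.symm)
  obtain rfl := hφ.injective t₁ h
  obtain rfl := (hT₁.strictMono hβ).eq_of_range_eq_of_apply_zero (hT₂.strictMono hβ)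
    (hr₁.trans hr₂.symm) (hT₁.1.trans hT₂.1.symm)
  refine ⟨funext fun i => by_contra fun hne => ?_, rfl⟩
  exact (hdisj hne).ne_of_mem (hT₁.2.2 i) (hT₂.2.2 i) rfl

end IsRetSeq

lemma exists_isRetSeq_of_fmap_ne_zero [Nonempty X] {φ : ℝ → X → X} {N : ℕ}
    {S : Fin N → Set X} {β α : ℝ} {q : ℤ → Fin N} (h : fmap φ S β α q ≠ 0) :
    ∃ T, IsRetSeq φ S β α (Pmap φ S β α q) q T ∧ fmap φ S β α q = T 1 := by
  by_cases hT : ∃ T, IsRetSeq φ S β α (Pmap φ S β α q) q T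
  · rw [fmap, dif_pos hT]
    exact ⟨_, hT.choose_spec, rfl⟩
  · rw [fmap, dif_neg hT] at h
    exact absurd rfl h

lemma eq_of_apply_Pmap_eq_of_mem_Wset [MetricSpace X] [CompactSpace X] [Nonempty X]
    {φ : ℝ → X → X} {N : ℕ} {S : Fin N → Set X} {η β α : ℝ}
    (hG : IsReturnSection φ (⋃ k, S k) β α) (hS : ∀ i, IsClosed (S i))
    (hcs : ∀ i, IsCrossSection φ η (S i)) (hdiam : ∀ i, Metric.diam (S i) ≤ α)
    (hα : IsExpansiveConstant φ η α) (hη : α - β ≤ η)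
    (hdisj : Pairwise (Function.onFun Disjoint S)) (hN : 0 < N)
    (q₁ : ℤ → Fin N) (hq₁ : q₁ ∈ closure (Qseq φ S hN '' Vset φ S η))
    (q₂ : ℤ → Fin N) (hq₂ : q₂ ∈ closure (Qseq φ S hN '' Vset φ S η)) (t₁ t₂ : ℝ)
    (ht₁ : 0 ≤ t₁) (ht₁f : t₁ < fmap φ S β α q₁) (ht₂ : 0 ≤ t₂) (ht₂f : t₂ < fmap φ S β α q₂)
    (hW : φ t₁ (Pmap φ S β α q₁) ∈ Wset φ S η)
    (h : φ t₁ (Pmap φ S β α q₁) = φ t₂ (Pmap φ S β α q₂)) : q₁ = q₂ ∧ t₁ = t₂ := by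
  obtain ⟨T₁, hT₁, hf₁⟩ := exists_isRetSeq_of_fmap_ne_zero (by linarith : fmap φ S β α q₁ ≠ 0)
  obtain ⟨T₂, hT₂, hf₂⟩ := exists_isRetSeq_of_fmap_ne_zero (by linarith : fmap φ S β α q₂ ≠ 0)
  exact hT₁.eq_of_apply_eq hT₂ hG.flow hG.pos hdisj
    (hT₁.range_eq_of_apply_mem_Wset hG hS hcs hdiam hα hη hN hq₁ hW)
    (hT₂.range_eq_of_apply_mem_Wset hG hS hcs hdiam hα hη hN hq₂ (h ▸ hW))
    ht₁ (hf₁ ▸ ht₁f) ht₂ (hf₂ ▸ ht₂f) h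

theorem strongly_isomorphic_of_small_flow_boundaries_general
    {X : Type*} [MetricSpace X] [CompactSpace X] [Nonempty X]
    [MeasurableSpace X] [BorelSpace X]
    (φ : ℝ → X → X) (hφ : IsFlow X φ)
    {N : ℕ} (hN : 0 < N) (S : Fin N → Set X) (η β α : ℝ)
    (hclosed : ∀ i, IsClosed (S i))
    (hcs : ∀ i, IsCrossSection φ η (S i))
    (hβ : 0 < β) (hβα : β ≤ α) (hαη : α < η)
    (hdiam : ∀ i, Metric.diam (S i) ≤ α)
    (hα : ∀ (t u : ℤ → ℝ) (x y : X), t 0 = 0 → u 0 = 0 →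
      (∀ i : ℤ, 0 < t (i + 1) - t i ∧ t (i + 1) - t i ≤ α) →
      (∀ i : ℤ, |u (i + 1) - u i| ≤ α) →
      Filter.Tendsto (fun n : ℕ => t (n : ℤ)) Filter.atTop Filter.atTop →
      Filter.Tendsto (fun n : ℕ => t (-(n : ℤ))) Filter.atTop Filter.atBot →
      (∀ i : ℤ, dist (φ (t i) x) (φ (u i) y) ≤ α) →
      ∃ s : ℝ, |s| ≤ η ∧ y = φ s x)
    (hcov₁ : flowSet φ (Set.Icc 0 α) (⋃ i, S i) = Set.univ)
    (hβdisj : Pairwise (Function.onFun Disjoint fun i => flowSet φ (Set.Icc 0 β) (S i)))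
    (hsmall : ∀ i, IsNullSet φ (flowSet φ (Set.Icc (-η) η) (flowBoundary φ η (S i)))) :
    IsNullSet φ (Wset φ S η)ᶜ ∧
    (∀ q₁ ∈ closure (Qseq φ S hN '' Vset φ S η),
      ∀ q₂ ∈ closure (Qseq φ S hN '' Vset φ S η), ∀ t₁ t₂ : ℝ,
        0 ≤ t₁ → t₁ < fmap φ S β α q₁ → 0 ≤ t₂ → t₂ < fmap φ S β α q₂ →
        φ t₁ (Pmap φ S β α q₁) ∈ Wset φ S η →
        φ t₁ (Pmap φ S β α q₁) = φ t₂ (Pmap φ S β α q₂) → q₁ = q₂ ∧ t₁ = t₂) ∧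
    (∃ E : Set X, IsNullSet φ Eᶜ ∧
      ∀ q₁ ∈ closure (Qseq φ S hN '' Vset φ S η),
        ∀ q₂ ∈ closure (Qseq φ S hN '' Vset φ S η), ∀ t₁ t₂ : ℝ,
          0 ≤ t₁ → t₁ < fmap φ S β α q₁ → 0 ≤ t₂ → t₂ < fmap φ S β α q₂ →
          φ t₁ (Pmap φ S β α q₁) ∈ E →
          φ t₁ (Pmap φ S β α q₁) = φ t₂ (Pmap φ S β α q₂) → q₁ = q₂ ∧ t₁ = t₂) := by
  have hG := isReturnSection_iUnion hφ hclosed hcs hβ (hβα.trans hαη.le) hβdisj hcov₁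
  have hdisj : Pairwise (Function.onFun Disjoint S) := fun i j hij =>
    (hβdisj hij).mono (hφ.subset_flowSet (left_mem_Icc.2 hβ.le) _)
      (hφ.subset_flowSet (left_mem_Icc.2 hβ.le) _)
  have hnull := isNullSet_compl_Wset hφ (hβ.trans_le hβα |>.trans hαη) hsmall
  have hinj := eq_of_apply_Pmap_eq_of_mem_Wset hG hclosed hcs hdiam hα (by linarith) hdisj hN
  exact ⟨hnull, hinj, _, hnull, hinj⟩

/-- Assume moreover that each cross-section `Sᵢ` has a small flow boundary and that
`π(q,t) = Φ_t(P(q))` is a topological extension (i.e. surjective) of `(X,Φ)` by the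
suspension flow `(Λ_f, Ψ)` over `Λ = closure(Q(V))` with roof `f`. Then `W` is a full set,
`π` restricted to `π⁻¹(W)` is injective (points of the suspension being represented by pairs
`(q,t)`, `q ∈ Λ`, `0 ≤ t < f(q)`), and consequently `π` is a strongly isomorphic symbolic
extension. -/
theorem strongly_isomorphic_of_small_flow_boundaries
    {X : Type*} [MetricSpace X] [CompactSpace X] [Nonempty X]
    [MeasurableSpace X] [BorelSpace X]
    (φ : ℝ → X → X) (hφ : IsFlow X φ)
    {N : ℕ} (hN : 0 < N) (S : Fin N → Set X) (η β α : ℝ)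
    (hclosed : ∀ i, IsClosed (S i))
    (hdisj : Pairwise (Function.onFun Disjoint S))
    (hcs : ∀ i, IsCrossSection φ η (S i))
    (hβ : 0 < β) (hβα : β ≤ α) (hαη : α < η)
    (hdiam : ∀ i, Metric.diam (S i) ≤ α)
    (hα : ∀ (t u : ℤ → ℝ) (x y : X), t 0 = 0 → u 0 = 0 →
      (∀ i : ℤ, 0 < t (i + 1) - t i ∧ t (i + 1) - t i ≤ α) →
      (∀ i : ℤ, |u (i + 1) - u i| ≤ α) →
      Filter.Tendsto (fun n : ℕ => t (n : ℤ)) Filter.atTop Filter.atTop →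
      Filter.Tendsto (fun n : ℕ => t (-(n : ℤ))) Filter.atTop Filter.atBot →
      (∀ i : ℤ, dist (φ (t i) x) (φ (u i) y) ≤ α) →
      ∃ s : ℝ, |s| ≤ η ∧ y = φ s x)
    (hcov₁ : flowSet φ (Set.Icc 0 α) (⋃ i, S i) = Set.univ)
    (hcov₂ : flowSet φ (Set.Icc (-α) 0) (⋃ i, S i) = Set.univ)
    (hβdisj : Pairwise (Function.onFun Disjoint fun i => flowSet φ (Set.Icc 0 β) (S i)))
    (hsmall : ∀ i, IsNullSet φ (flowSet φ (Set.Icc (-η) η) (flowBoundary φ η (S i))))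
    (hsurj : ∀ x : X, ∃ q ∈ closure (Qseq φ S hN '' Vset φ S η), ∃ t : ℝ,
      0 ≤ t ∧ t ≤ fmap φ S β α q ∧ φ t (Pmap φ S β α q) = x) :
    IsNullSet φ (Wset φ S η)ᶜ ∧
    (∀ q₁ ∈ closure (Qseq φ S hN '' Vset φ S η),
      ∀ q₂ ∈ closure (Qseq φ S hN '' Vset φ S η), ∀ t₁ t₂ : ℝ,
        0 ≤ t₁ → t₁ < fmap φ S β α q₁ → 0 ≤ t₂ → t₂ < fmap φ S β α q₂ →
        φ t₁ (Pmap φ S β α q₁) ∈ Wset φ S η →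
        φ t₁ (Pmap φ S β α q₁) = φ t₂ (Pmap φ S β α q₂) → q₁ = q₂ ∧ t₁ = t₂) ∧
    (∃ E : Set X, IsNullSet φ Eᶜ ∧
      ∀ q₁ ∈ closure (Qseq φ S hN '' Vset φ S η),
        ∀ q₂ ∈ closure (Qseq φ S hN '' Vset φ S η), ∀ t₁ t₂ : ℝ,
          0 ≤ t₁ → t₁ < fmap φ S β α q₁ → 0 ≤ t₂ → t₂ < fmap φ S β α q₂ →
          φ t₁ (Pmap φ S β α q₁) ∈ E →
          φ t₁ (Pmap φ S β α q₁) = φ t₂ (Pmap φ S β α q₂) → q₁ = q₂ ∧ t₁ = t₂) :=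
  strongly_isomorphic_of_small_flow_boundaries_general φ hφ hN S η β α hclosed hcs hβ hβα hαη hdiam
    hα hcov₁ hβdisj hsmall
end

section
/- The set G ⋊ Σ^ℤ is closed in G × Σ^ℤ. -/
open Set Topology

variable {X : Type*}

/-! Gaps in `[β, α]` and `t 0 = 0` confine a return-time sequence to the compact box
`∏ i, [-|i| C, |i| C]` with `C = max |β| |α|`. The conditions defining a return-time sequence are
closed (the flow is continuous, the `S i` are closed and `Σ` is finite and discrete), so the triples
`(x, q, t)` with `t` a return-time sequence for `(x, q)` form a compact set, and `G ⋊ Σ^ℤ` is its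
projection: compact, hence closed. Membership `x ∈ G` comes for free from `Φ_0 x = x`. -/

lemma abs_le_natAbs_mul_of_abs_sub_le {t : ℤ → ℝ} {C : ℝ} (h0 : t 0 = 0)
    (hstep : ∀ i, |t (i + 1) - t i| ≤ C) (i : ℤ) : |t i| ≤ i.natAbs * C := by
  have hup : ∀ n : ℕ, |t n| ≤ n * C := by
    intro n
    induction n with
    | zero => simp [h0]
    | succ n ih =>
      have := abs_sub_abs_le_abs_sub (t (n + 1)) (t n)
      push_cast
      linarith [hstep n]
  have hdown : ∀ n : ℕ, |t (-n)| ≤ n * C := by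
    intro n
    induction n with
    | zero => simp [h0]
    | succ n ih =>
      have := abs_sub_abs_le_abs_sub (t (-(n + 1))) (t (-n))
      have hs := hstep (-(n + 1))
      rw [show -((n : ℤ) + 1) + 1 = -n by ring, abs_sub_comm] at hs
      push_cast
      linarith
  obtain ⟨n, rfl | rfl⟩ := Int.eq_nat_or_neg i
  · simpa using hup n
  · simpa using hdown n

lemma isCompact_setOf_gaps_mem_Icc (β α : ℝ) :
    IsCompact {t : ℤ → ℝ | t 0 = 0 ∧ ∀ i, β ≤ t (i + 1) - t i ∧ t (i + 1) - t i ≤ α} := by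
  set C := max |β| |α|
  refine (isCompact_univ_pi fun i : ℤ => isCompact_Icc (a := -(i.natAbs * C))
    (b := i.natAbs * C)).of_isClosed_subset ?_ ?_
  · simp only [ofPred_and, ofPred_forall]
    exact (isClosed_eq (continuous_apply 0) continuous_const).inter <| isClosed_iInter fun i =>
      (isClosed_le continuous_const (by fun_prop)).inter
        (isClosed_le (by fun_prop) continuous_const)
  · rintro t ⟨h0, hgap⟩ i -
    rw [mem_Icc, ← abs_le]
    refine abs_le_natAbs_mul_of_abs_sub_le h0 (fun j => abs_le.2 ⟨?_, ?_⟩) i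
    · linarith [(hgap j).1, neg_abs_le β, le_max_left |β| |α|]
    · linarith [(hgap j).2, le_abs_self α, le_max_right |β| |α|]

lemma isClosed_setOf_mem_of_continuous {Y ι : Type*} [TopologicalSpace X] [TopologicalSpace Y]
    [TopologicalSpace ι] [DiscreteTopology ι] [Finite ι] {S : ι → Set X} (hS : ∀ j, IsClosed (S j))
    {f : Y → ι} {g : Y → X} (hf : Continuous f) (hg : Continuous g) :
    IsClosed {y | g y ∈ S (f y)} := by
  have : {y | g y ∈ S (f y)} = ⋃ j, f ⁻¹' {j} ∩ g ⁻¹' S j := by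
    ext y
    simp
  rw [this]
  exact isClosed_iUnion_of_finite fun j =>
    ((isClosed_discrete {j}).preimage hf).inter ((hS j).preimage hg)

lemma isClosed_setOf_isRetSeq [TopologicalSpace X] {φ : ℝ → X → X}
    (hφ : Continuous fun p : X × ℝ => φ p.2 p.1) {N : ℕ} {S : Fin N → Set X}
    (hS : ∀ j, IsClosed (S j)) (β α : ℝ) :
    IsClosed {p : X × (ℤ → Fin N) × (ℤ → ℝ) | IsRetSeq φ S β α p.1 p.2.1 p.2.2} := by
  have : {p : X × (ℤ → Fin N) × (ℤ → ℝ) | IsRetSeq φ S β α p.1 p.2.1 p.2.2} =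
      (fun p => p.2.2) ⁻¹' {t | t 0 = 0 ∧ ∀ i, β ≤ t (i + 1) - t i ∧ t (i + 1) - t i ≤ α} ∩
        ⋂ i, {p | φ (p.2.2 i) p.1 ∈ S (p.2.1 i)} := by
    ext p
    simp [IsRetSeq, and_assoc]
  rw [this]
  refine ((isCompact_setOf_gaps_mem_Icc β α).isClosed.preimage (by fun_prop)).inter
    (isClosed_iInter fun i => ?_)
  exact isClosed_setOf_mem_of_continuous hS (by fun_prop)
    (hφ.comp (continuous_fst.prodMk (by fun_prop)))

theorem isClosed_GJoin_general
    {X : Type*} [MetricSpace X] [CompactSpace X]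
    (φ : ℝ → X → X) (hφ : IsFlow X φ)
    {N : ℕ} (S : Fin N → Set X) (β α : ℝ)
    (hclosed : ∀ i, IsClosed (S i)) :
    IsClosed (GJoin φ S β α) := by
  set K := {p : X × (ℤ → Fin N) × (ℤ → ℝ) | IsRetSeq φ S β α p.1 p.2.1 p.2.2}
  have hK : IsCompact K :=
    (isCompact_univ.prod (isCompact_univ.prod (isCompact_setOf_gaps_mem_Icc β α)))
      |>.of_isClosed_subset
        (isClosed_setOf_isRetSeq hφ.cont hclosed β α) fun p hp => ⟨trivial, trivial, hp.1, hp.2.1⟩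
  have hG : GJoin φ S β α = (fun p => (p.1, p.2.1)) '' K := by
    ext ⟨x, q⟩
    refine ⟨fun ⟨_, t, ht⟩ => ⟨(x, q, t), ht, rfl⟩, ?_⟩
    rintro ⟨⟨x, q, t⟩, ht, ⟨⟩⟩
    refine ⟨mem_iUnion.2 ⟨q 0, ?_⟩, t, ht⟩
    have h0 := ht.2.2 0
    rwa [ht.1, hφ.map_zero] at h0
  rw [hG]
  exact (hK.image (by fun_prop)).isClosed

/-- `G ⋊ Σ^ℤ` is closed in `G × Σ^ℤ` (equivalently, since `G` is closed, in `X × Σ^ℤ`). -/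
theorem isClosed_GJoin
    {X : Type*} [MetricSpace X] [CompactSpace X]
    (φ : ℝ → X → X) (hφ : IsFlow X φ)
    {N : ℕ} (S : Fin N → Set X) (η β α : ℝ)
    (hclosed : ∀ i, IsClosed (S i))
    (hdisj : Pairwise (Function.onFun Disjoint S))
    (hcs : ∀ i, IsCrossSection φ η (S i))
    (hβ : 0 < β) (hβα : β ≤ α) (hαη : α < η) :
    IsClosed (GJoin φ S β α) :=
  isClosed_GJoin_general φ hφ S β α hclosed
end

section
/- The map t : G ⋊ Σ^ℤ → ℝ^ℤ sending each (x,q) to its unique return-time sequence is continuous. -/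
open Set Topology Filter

variable {X : Type*}

/-- The map sending `(x, q)` to its return-time sequence (junk value `0` outside
`G ⋊ Σ^ℤ`; on `G ⋊ Σ^ℤ` the return-time sequence is unique, so `choose` picks it). -/
noncomputable def retSeqMap {N : ℕ} (φ : ℝ → X → X) (S : Fin N → Set X) (β α : ℝ)
    (p : X × (ℤ → Fin N)) : ℤ → ℝ :=
  @dite _ (∃ t : ℤ → ℝ, IsRetSeq φ S β α p.1 p.2 t) (Classical.dec _)
    (fun h => h.choose) (fun _ => 0)

/-!
Induction on the index `i`. If `t_i` is continuous at `p`, then near `p` the gap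
`t_{i±1} - t_i` stays in a compact interval of length `α - β < η`, so it has cluster points.
At a cluster point `c` the flow sends `x` into the closed section `S_{q_{i±1}}` at time
`t_i(p) + c`, as it does at time `t_{i±1}(p)`; these times differ by at most `α - β < η`,
so injectivity of the section makes them equal. A unique cluster point in a compact set is a limit.
-/

theorem MapClusterPt.prodMk_of_tendsto {Y Z ι : Type*} [TopologicalSpace Y] [TopologicalSpace Z]
    {l : Filter ι} {f : ι → Y} {g : ι → Z} {y : Y} {z : Z}
    (hf : Tendsto f l (𝓝 y)) (hg : MapClusterPt z l g) :
    MapClusterPt (y, z) l fun n => (f n, g n) := by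
  rw [((𝓝 y).basis_sets.prod_nhds (𝓝 z).basis_sets).mapClusterPt_iff_frequently]
  rintro ⟨s, t⟩ ⟨hs, ht⟩
  exact ((mapClusterPt_iff_frequently.1 hg t ht).and_eventually (hf hs)).mono
    fun _ h => ⟨h.2, h.1⟩

section CrossSection

variable [TopologicalSpace X] {φ : ℝ → X → X} {η : ℝ} {S : Set X}

theorem IsCrossSection.eq_of_abs_sub_le (hφ : IsFlow X φ) (hcs : IsCrossSection φ η S) {x : X}
    {s s' : ℝ} (hs : φ s x ∈ S) (hs' : φ s' x ∈ S) (hd : |s' - s| ≤ η) : s = s' := by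
  have hmem : (φ s x, s' - s) ∈ S ×ˢ Icc (-η) η := ⟨hs, abs_le.mp hd⟩
  have hmem₀ : (φ s' x, (0 : ℝ)) ∈ S ×ˢ Icc (-η) η := ⟨hs', by simp [hcs.1.le]⟩
  have hflow : φ (s' - s) (φ s x) = φ 0 (φ s' x) := by
    rw [← hφ.map_add, hφ.map_zero, sub_add_cancel]
  exact (sub_eq_zero.mp (congrArg Prod.snd (hcs.2 hmem hmem₀ hflow))).symm

theorem IsCrossSection.tendsto_of_gap_mem_Icc (hφ : IsFlow X φ) (hS : IsClosed S)
    (hcs : IsCrossSection φ η S) {ι : Type*} {l : Filter ι} {x : ι → X} {r r' : ι → ℝ}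
    {x₀ : X} {r₀ r₀' a b : ℝ} (hab : b - a ≤ η)
    (hx : Tendsto x l (𝓝 x₀)) (hr : Tendsto r l (𝓝 r₀))
    (hgap : ∀ᶠ n in l, r' n - r n ∈ Icc a b) (hhit : ∀ᶠ n in l, φ (r' n) (x n) ∈ S)
    (hgap₀ : r₀' - r₀ ∈ Icc a b) (hhit₀ : φ r₀' x₀ ∈ S) :
    Tendsto r' l (𝓝 r₀') := by
  have hd : Tendsto (fun n => r' n - r n) l (𝓝 (r₀' - r₀)) := by
    refine isCompact_Icc.tendsto_nhds_of_unique_mapClusterPt hgap fun c hc hcl => ?_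
    let C : Set ((X × ℝ) × ℝ) := {z | φ (z.1.2 + z.2) z.1.1 ∈ S}
    have hC : IsClosed C :=
      hS.preimage (hφ.cont.comp (by fun_prop : Continuous fun z : (X × ℝ) × ℝ =>
        (z.1.1, z.1.2 + z.2)))
    have hcC : ((x₀, r₀), c) ∈ C := by
      refine hC.closure_subset
        ((MapClusterPt.prodMk_of_tendsto (hx.prodMk_nhds hr) hcl).mem_closure_of_mem C ?_)
      exact hhit.mono fun n hn => by simpa [C] using hn
    have hclose : |r₀' - (r₀ + c)| ≤ η := by
      rw [abs_le]; constructor <;> linarith [hc.1, hc.2, hgap₀.1, hgap₀.2]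
    linarith [hcs.eq_of_abs_sub_le hφ hcC hhit₀ hclose]
  simpa using hr.add hd

end CrossSection

section ReturnTimes

variable {N : ℕ} {φ : ℝ → X → X} {S : Fin N → Set X} {β α : ℝ}

theorem isRetSeq_retSeqMap {p : X × (ℤ → Fin N)} (hp : p ∈ GJoin φ S β α) :
    IsRetSeq φ S β α p.1 p.2 (retSeqMap φ S β α p) := by
  rw [retSeqMap, dif_pos hp.2]
  exact hp.2.choose_spec

theorem IsRetSeq.sub_mem_Icc_succ {x : X} {q : ℤ → Fin N} {t : ℤ → ℝ}
    (ht : IsRetSeq φ S β α x q t) (k : ℤ) : t (k + 1) - t k ∈ Icc β α :=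
  ht.2.1 k

theorem IsRetSeq.sub_mem_Icc_pred {x : X} {q : ℤ → Fin N} {t : ℤ → ℝ}
    (ht : IsRetSeq φ S β α x q t) (k : ℤ) : t (k - 1) - t k ∈ Icc (-α) (-β) := by
  have h := ht.sub_mem_Icc_succ (k - 1)
  rw [sub_add_cancel] at h
  constructor <;> linarith [h.1, h.2]

variable [TopologicalSpace X] {η : ℝ}

theorem tendsto_retSeqMap_apply_of_gap (hφ : IsFlow X φ) (hclosed : ∀ i, IsClosed (S i))
    (hcs : ∀ i, IsCrossSection φ η (S i)) {p : X × (ℤ → Fin N)} (hp : p ∈ GJoin φ S β α)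
    {i j : ℤ} {a b : ℝ} (hab : b - a ≤ η)
    (hgap : ∀ x q t, IsRetSeq φ S β α x q t → t j - t i ∈ Icc a b)
    (hi : Tendsto (fun p' => retSeqMap φ S β α p' i) (𝓝[GJoin φ S β α] p)
      (𝓝 (retSeqMap φ S β α p i))) :
    Tendsto (fun p' => retSeqMap φ S β α p' j) (𝓝[GJoin φ S β α] p)
      (𝓝 (retSeqMap φ S β α p j)) := by
  have hret : ∀ᶠ p' in 𝓝[GJoin φ S β α] p, IsRetSeq φ S β α p'.1 p'.2 (retSeqMap φ S β α p') :=
    eventually_nhdsWithin_of_forall fun _ => isRetSeq_retSeqMap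
  have hsymb : ∀ᶠ p' in 𝓝[GJoin φ S β α] p, p'.2 j = p.2 j := by
    have h := ((continuous_apply j).comp continuous_snd).continuousAt (x := p).tendsto
    rw [nhds_discrete (Fin N), tendsto_pure] at h
    exact nhdsWithin_le_nhds h
  refine (hcs (p.2 j)).tendsto_of_gap_mem_Icc hφ (hclosed _) hab
    (continuous_fst.continuousWithinAt (x := p)) hi (hret.mono fun _ h => hgap _ _ _ h) ?_
    (hgap _ _ _ (isRetSeq_retSeqMap hp)) ((isRetSeq_retSeqMap hp).2.2 j)
  filter_upwards [hret, hsymb] with p' hp' hq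
  exact hq ▸ hp'.2.2 j

end ReturnTimes

theorem continuousOn_retSeqMap_general
    {X : Type*} [MetricSpace X]
    (φ : ℝ → X → X) (hφ : IsFlow X φ)
    {N : ℕ} (S : Fin N → Set X) (η β α : ℝ)
    (hclosed : ∀ i, IsClosed (S i))
    (hcs : ∀ i, IsCrossSection φ η (S i))
    (hβ : 0 < β) (hαη : α < η) :
    ContinuousOn (retSeqMap φ S β α) (GJoin φ S β α) := by
  intro p hp
  refine tendsto_pi_nhds.2 fun i => ?_
  induction i with
  | zero =>
    refine tendsto_const_nhds.congr' ?_
    filter_upwards [self_mem_nhdsWithin] with p' hp'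
    rw [(isRetSeq_retSeqMap hp).1, (isRetSeq_retSeqMap hp').1]
  | succ k ih =>
    exact tendsto_retSeqMap_apply_of_gap hφ hclosed hcs hp (by linarith)
      (fun _ _ _ ht => ht.sub_mem_Icc_succ k) ih
  | pred k ih =>
    exact tendsto_retSeqMap_apply_of_gap hφ hclosed hcs hp (by linarith)
      (fun _ _ _ ht => ht.sub_mem_Icc_pred (-k)) ih

/-- The map `t : G ⋊ Σ^ℤ → ℝ^ℤ` sending each `(x,q)` to its unique return-time sequence
is continuous. -/
theorem continuousOn_retSeqMap
    {X : Type*} [MetricSpace X] [CompactSpace X]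
    (φ : ℝ → X → X) (hφ : IsFlow X φ)
    {N : ℕ} (S : Fin N → Set X) (η β α : ℝ)
    (hclosed : ∀ i, IsClosed (S i))
    (hdisj : Pairwise (Function.onFun Disjoint S))
    (hcs : ∀ i, IsCrossSection φ η (S i))
    (hβ : 0 < β) (hβα : β ≤ α) (hαη : α < η)
    (huniq : ∀ p ∈ GJoin φ S β α, ∃! t : ℤ → ℝ, IsRetSeq φ S β α p.1 p.2 t) :
    ContinuousOn (retSeqMap φ S β α) (GJoin φ S β α) :=
  continuousOn_retSeqMap_general φ hφ S η β α hclosed hcs hβ hαη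
end

section
/- The projection P_2 : G ⋊ Σ^ℤ → Σ^ℤ defined by (x,q) ↦ q is injective. -/
open Set Topology

variable {X : Type*}

/-!
Two points `x, y` of `G` with the same itinerary `q` visit the same section `S (q i)` at their
`i`-th return times, so their orbits stay within `diam (S (q i)) ≤ α` of each other along these
times. The expansivity property of `α` then puts `y = φ s x` with `|s| ≤ η`, and since `x` and `y`
both lie on `S (q 0)`, injectivity of the flow on `S (q 0) × [-η, η]` forces `s = 0`.
-/

section GapsBoundedBelow

variable {t : ℤ → ℝ} {β : ℝ}

theorem add_natCast_mul_le_of_le_sub_succ (ht : ∀ i, β ≤ t (i + 1) - t i) (n : ℕ) :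
    t 0 + n * β ≤ t n := by
  induction n with
  | zero => simp
  | succ n ih =>
    have := ht n
    push_cast
    linarith

theorem tendsto_atTop_of_le_sub_succ (hβ : 0 < β) (ht : ∀ i, β ≤ t (i + 1) - t i) :
    Filter.Tendsto (fun n : ℕ => t n) Filter.atTop Filter.atTop :=
  Filter.tendsto_atTop_mono (add_natCast_mul_le_of_le_sub_succ ht) <|
    Filter.tendsto_atTop_add_const_left _ _ <|
      (tendsto_natCast_atTop_atTop (R := ℝ)).atTop_mul_const hβ

theorem tendsto_neg_atBot_of_le_sub_succ (hβ : 0 < β) (ht : ∀ i, β ≤ t (i + 1) - t i) :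
    Filter.Tendsto (fun n : ℕ => t (-n)) Filter.atTop Filter.atBot := by
  -- `i ↦ -t (-i)` has the same gaps as `t`, read backwards.
  have hrev : ∀ i : ℤ, β ≤ -t (-(i + 1)) - -t (-i) := fun i => by
    have := ht (-(i + 1))
    rw [show -(i + 1) + 1 = -i by ring] at this
    linarith
  simpa [Function.comp_def] using Filter.tendsto_neg_atTop_atBot.comp (tendsto_atTop_of_le_sub_succ (t := fun i => -t (-i)) hβ hrev)

end GapsBoundedBelow

theorem IsCrossSection.eq_of_eq_flow {φ : ℝ → X → X} {η s : ℝ} {S : Set X} {x y : X}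
    (hS : IsCrossSection φ η S) (hφ0 : φ 0 y = y) (hx : x ∈ S) (hy : y ∈ S) (hs : |s| ≤ η)
    (hxy : y = φ s x) : x = y :=
  congrArg Prod.fst <| hS.2 (mk_mem_prod hx (abs_le.mp hs))
    (mk_mem_prod hy ⟨by linarith [hS.1], hS.1.le⟩) (by simp only [hφ0, ← hxy])

namespace IsRetSeq

variable {N : ℕ} {φ : ℝ → X → X} {S : Fin N → Set X} {β α : ℝ} {x : X} {q : ℤ → Fin N}
  {t : ℤ → ℝ}

theorem mem_zero_s7 (ht : IsRetSeq φ S β α x q t) (hφ0 : φ 0 x = x) : x ∈ S (q 0) := by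
  simpa [ht.1, hφ0] using ht.2.2 0

theorem sub_succ_pos (ht : IsRetSeq φ S β α x q t) (hβ : 0 < β) (i : ℤ) :
    0 < t (i + 1) - t i :=
  hβ.trans_le (ht.2.1 i).1

theorem dist_le [PseudoMetricSpace X] {y : X} {u : ℤ → ℝ} (ht : IsRetSeq φ S β α x q t)
    (hu : IsRetSeq φ S β α y q u) (hbdd : ∀ i, Bornology.IsBounded (S i))
    (hdiam : ∀ i, Metric.diam (S i) ≤ α) (i : ℤ) :
    dist (φ (t i) x) (φ (u i) y) ≤ α :=
  (Metric.dist_le_diam_of_mem (hbdd _) (ht.2.2 i) (hu.2.2 i)).trans (hdiam _)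

end IsRetSeq

theorem proj_snd_injOn_GJoin_general
    {X : Type*} [MetricSpace X] [CompactSpace X]
    (φ : ℝ → X → X) (hφ : IsFlow X φ)
    {N : ℕ} (S : Fin N → Set X) (η β α : ℝ)
    (hcs : ∀ i, IsCrossSection φ η (S i))
    (hβ : 0 < β)
    (hdiam : ∀ i, Metric.diam (S i) ≤ α)
    (hα : ∀ (t u : ℤ → ℝ) (x y : X), t 0 = 0 → u 0 = 0 →
      (∀ i : ℤ, 0 < t (i + 1) - t i ∧ t (i + 1) - t i ≤ α) →
      (∀ i : ℤ, |u (i + 1) - u i| ≤ α) →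
      Filter.Tendsto (fun n : ℕ => t (n : ℤ)) Filter.atTop Filter.atTop →
      Filter.Tendsto (fun n : ℕ => t (-(n : ℤ))) Filter.atTop Filter.atBot →
      (∀ i : ℤ, dist (φ (t i) x) (φ (u i) y) ≤ α) →
      ∃ s : ℝ, |s| ≤ η ∧ y = φ s x) :
    ∀ (x y : X) (q : ℤ → Fin N),
      (x, q) ∈ GJoin φ S β α → (y, q) ∈ GJoin φ S β α → x = y := by
  rintro x y q ⟨-, t, ht⟩ ⟨-, u, hu⟩
  have ht_gap i := (ht.2.1 i).1
  obtain ⟨s, hs, hxy⟩ := hα t u x y ht.1 hu.1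
    (fun i => ⟨ht.sub_succ_pos hβ i, (ht.2.1 i).2⟩)
    (fun i => (abs_of_pos (hu.sub_succ_pos hβ i)).trans_le (hu.2.1 i).2)
    (tendsto_atTop_of_le_sub_succ hβ ht_gap) (tendsto_neg_atBot_of_le_sub_succ hβ ht_gap)
    (ht.dist_le hu (fun _ => Metric.isBounded_of_compactSpace) hdiam)
  exact (hcs (q 0)).eq_of_eq_flow (hφ.map_zero y) (ht.mem_zero_s7 (hφ.map_zero x))
    (hu.mem_zero_s7 (hφ.map_zero y)) hs hxy

/-- The projection `P₂ : G ⋊ Σ^ℤ → Σ^ℤ`, `(x,q) ↦ q`, is injective. -/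
theorem proj_snd_injOn_GJoin
    {X : Type*} [MetricSpace X] [CompactSpace X]
    (φ : ℝ → X → X) (hφ : IsFlow X φ)
    {N : ℕ} (S : Fin N → Set X) (η β α : ℝ)
    (hclosed : ∀ i, IsClosed (S i))
    (hdisj : Pairwise (Function.onFun Disjoint S))
    (hcs : ∀ i, IsCrossSection φ η (S i))
    (hβ : 0 < β) (hβα : β ≤ α) (hαη : α < η)
    (hdiam : ∀ i, Metric.diam (S i) ≤ α)
    (hα : ∀ (t u : ℤ → ℝ) (x y : X), t 0 = 0 → u 0 = 0 →
      (∀ i : ℤ, 0 < t (i + 1) - t i ∧ t (i + 1) - t i ≤ α) →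
      (∀ i : ℤ, |u (i + 1) - u i| ≤ α) →
      Filter.Tendsto (fun n : ℕ => t (n : ℤ)) Filter.atTop Filter.atTop →
      Filter.Tendsto (fun n : ℕ => t (-(n : ℤ))) Filter.atTop Filter.atBot →
      (∀ i : ℤ, dist (φ (t i) x) (φ (u i) y) ≤ α) →
      ∃ s : ℝ, |s| ≤ η ∧ y = φ s x) :
    ∀ (x y : X) (q : ℤ → Fin N),
      (x, q) ∈ GJoin φ S β α → (y, q) ∈ GJoin φ S β α → x = y :=
  proj_snd_injOn_GJoin_general φ hφ S η β α hcs hβ hdiam hα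
end

section
/- Let (X,Φ) be a topological flow, let S be a set contained in a closed cross-section, and let U ⊂ S. Then ∂^Φ(U) = ∂_S(U) ∪ (closure(U) ∩ ∂^Φ(S)). -/
open Set Topology

variable {X : Type*}

/-- `∂_S U`: the boundary of `U` in the subspace topology of `S`, as a subset of `X`. -/
def relBoundary [TopologicalSpace X] (S U : Set X) : Set X :=
  (fun y : S => (y : X)) '' frontier {y : S | (y : X) ∈ U}

/-- `Int_S U`: the interior of `U` in the subspace topology of `S`, as a subset of `X`. -/
def relInterior [TopologicalSpace X] (S U : Set X) : Set X :=
  (fun y : S => (y : X)) '' interior {y : S | (y : X) ∈ U}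

/-!
Since the cross-section `C` is closed, `X` compact and the flow continuous, the set
`Φ_{[-η/2,η/2]}(C \ V)` is closed for every open `V`; by injectivity of the flow on
`C × [-η, η]` it meets `C` only inside `C \ V`. Hence a point of `Int^Φ(S)` that lies in
`Int_S(U)` (witnessed by `V`) has a flow neighbourhood avoiding `Φ_{[-η/2,η/2]}(C \ V)`, which
lies in `Φ_{[-η/2,η/2]}(U)`. Together with the converse inclusion this gives
`Int^Φ(U) = Int_S(U) ∩ Int^Φ(S)`, and the boundary formula is set algebra.
-/

section FlowSet

variable {φ : ℝ → X → X} {L : Set ℝ} {A B C : Set X} {η : ℝ}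

lemma flowSet_eq_image :
    flowSet φ L A = (fun p : X × ℝ => φ p.2 p.1) '' (A ×ˢ L) := by
  ext y
  constructor
  · rintro ⟨t, ht, x, hx, rfl⟩
    exact ⟨(x, t), ⟨hx, ht⟩, rfl⟩
  · rintro ⟨⟨x, t⟩, ⟨hx, ht⟩, rfl⟩
    exact ⟨t, ht, x, hx, rfl⟩

lemma flowSet_mono (h : A ⊆ B) : flowSet φ L A ⊆ flowSet φ L B := by
  rintro y ⟨t, ht, x, hx, rfl⟩
  exact ⟨t, ht, x, h hx, rfl⟩

lemma Icc_neg_half_subset_Icc_neg {η : ℝ} (hη : 0 ≤ η) : Icc (-(η / 2)) (η / 2) ⊆ Icc (-η) η :=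
  Icc_subset_Icc (by linarith) (by linarith)

lemma IsCrossSection.flowSet_inter_subset (hcs : IsCrossSection φ η C)
    (h0 : ∀ x, φ 0 x = x) (hAC : A ⊆ C) (hL : L ⊆ Icc (-η) η) :
    flowSet φ L A ∩ C ⊆ A := by
  rintro y ⟨⟨t, ht, x, hx, rfl⟩, hyC⟩
  have h0η : (0 : ℝ) ∈ Icc (-η) η := ⟨neg_nonpos.mpr hcs.1.le, hcs.1.le⟩
  have hxy : x = φ t x :=
    congrArg Prod.fst (hcs.2 ⟨hAC hx, hL ht⟩ ⟨hyC, h0η⟩ (h0 (φ t x)).symm :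
      ((x, t) : X × ℝ) = (φ t x, 0))
  exact hxy ▸ hx

lemma IsCompact.flowSet [TopologicalSpace X] (hφ : IsFlow X φ) (hA : IsCompact A)
    (hL : IsCompact L) : IsCompact (flowSet φ L A) := by
  rw [flowSet_eq_image]
  exact (hA.prod hL).image hφ.cont

end FlowSet

section Relative

variable [TopologicalSpace X] {S U : Set X} {x : X}

lemma mem_relInterior_iff :
    x ∈ relInterior S U ↔ x ∈ S ∧ ∃ V : Set X, IsOpen V ∧ x ∈ V ∧ V ∩ S ⊆ U := by
  constructor
  · rintro ⟨y, hy, rfl⟩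
    obtain ⟨t, hts, hto, hyt⟩ := mem_interior.mp hy
    obtain ⟨V, hV, rfl⟩ := isOpen_induced_iff.mp hto
    exact ⟨y.2, V, hV, hyt, fun z ⟨hzV, hzS⟩ => hts (show (⟨z, hzS⟩ : S) ∈ _ from hzV)⟩
  · rintro ⟨hxS, V, hV, hxV, hVSU⟩
    refine ⟨⟨x, hxS⟩, mem_interior.mpr ?_, rfl⟩
    exact ⟨Subtype.val ⁻¹' V, fun z hz => hVSU ⟨hz, z.2⟩, hV.preimage continuous_subtype_val,
      hxV⟩

lemma relBoundary_eq_diff (hUS : U ⊆ S) :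
    relBoundary S U = (closure U ∩ S) \ relInterior S U := by
  have hU : Subtype.val '' (Subtype.val ⁻¹' U : Set S) = U := by
    rw [Subtype.image_preimage_coe, inter_eq_right.mpr hUS]
  have hclosure : Subtype.val '' closure (Subtype.val ⁻¹' U : Set S) = closure U ∩ S := by
    rw [IsInducing.subtypeVal.closure_eq_preimage_closure_image, hU, Subtype.image_preimage_coe,
      inter_comm]
  rw [relBoundary, frontier, image_sdiff Subtype.coe_injective]
  exact congrArg (· \ relInterior S U) hclosure

end Relative

section FlowInterior

variable [TopologicalSpace X] {φ : ℝ → X → X} {η : ℝ} {C S U : Set X}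

lemma flowInterior_mono (hUS : U ⊆ S) : flowInterior φ η U ⊆ flowInterior φ η S :=
  inter_subset_inter (interior_mono (flowSet_mono hUS)) hUS

lemma flowInterior_subset_relInterior (hφ : IsFlow X φ) (hcs : IsCrossSection φ η C)
    (hSC : S ⊆ C) (hUS : U ⊆ S) : flowInterior φ η U ⊆ relInterior S U := by
  rintro x ⟨hx, hxU⟩
  refine mem_relInterior_iff.mpr ⟨hUS hxU, _, isOpen_interior, hx, ?_⟩
  rintro y ⟨hy, hyS⟩
  exact hcs.flowSet_inter_subset hφ.map_zero (hUS.trans hSC)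
    (Icc_neg_half_subset_Icc_neg hcs.1.le) ⟨interior_subset hy, hSC hyS⟩

lemma relInterior_inter_flowInterior_subset [T2Space X] [CompactSpace X] (hφ : IsFlow X φ)
    (hC : IsClosed C) (hcs : IsCrossSection φ η C) (hSC : S ⊆ C) :
    relInterior S U ∩ flowInterior φ η S ⊆ flowInterior φ η U := by
  rintro x ⟨hxrel, hxI, hxS⟩
  obtain ⟨-, V, hV, hxV, hVSU⟩ := mem_relInterior_iff.mp hxrel
  set K := flowSet φ (Icc (-(η / 2)) (η / 2)) (C \ V)
  have hK : IsClosed K := ((hC.sdiff hV).isCompact.flowSet hφ isCompact_Icc).isClosed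
  have hxK : x ∉ K := fun hx => (hcs.flowSet_inter_subset hφ.map_zero sdiff_subset
    (Icc_neg_half_subset_Icc_neg hcs.1.le) ⟨hx, hSC hxS⟩).2 hxV
  refine ⟨mem_interior.mpr ⟨Kᶜ ∩ interior (flowSet φ _ S), ?_,
    hK.isOpen_compl.inter isOpen_interior, hxK, hxI⟩, hVSU ⟨hxV, hxS⟩⟩
  rintro y ⟨hyK, hy⟩
  obtain ⟨t, ht, s, hs, rfl⟩ := interior_subset hy
  have hsV : s ∈ V := by_contra fun hsV => hyK ⟨t, ht, s, ⟨hSC hs, hsV⟩, rfl⟩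
  exact ⟨t, ht, s, hVSU ⟨hsV, hs⟩, rfl⟩

lemma flowInterior_eq_relInterior_inter [T2Space X] [CompactSpace X] (hφ : IsFlow X φ)
    (hC : IsClosed C) (hcs : IsCrossSection φ η C) (hSC : S ⊆ C) (hUS : U ⊆ S) :
    flowInterior φ η U = relInterior S U ∩ flowInterior φ η S :=
  (subset_inter (flowInterior_subset_relInterior hφ hcs hSC hUS) (flowInterior_mono hUS)).antisymm
    (relInterior_inter_flowInterior_subset hφ hC hcs hSC)

end FlowInterior

/-- For `U ⊆ S`, `S` contained in a closed cross-section: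
`∂^Φ(U) = ∂_S(U) ∪ (closure U ∩ ∂^Φ(S))`. -/
theorem flowBoundary_eq_relBoundary_union
    {X : Type*} [MetricSpace X] [CompactSpace X]
    (φ : ℝ → X → X) (hφ : IsFlow X φ)
    (η : ℝ) (C : Set X) (hC : IsClosed C) (hcs : IsCrossSection φ η C)
    (S U : Set X) (hSC : S ⊆ C) (hUS : U ⊆ S) :
    flowBoundary φ η U = relBoundary S U ∪ (closure U ∩ flowBoundary φ η S) := by
  rw [flowBoundary, flowBoundary, flowInterior_eq_relInterior_inter hφ hC hcs hSC hUS,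
    relBoundary_eq_diff hUS]
  ext x
  have hS : x ∈ flowInterior φ η S → x ∈ S := And.right
  have hclosure : x ∈ closure U → x ∈ closure S := (closure_mono hUS ·)
  simp only [mem_sdiff, mem_union, mem_inter_iff]
  tauto
end
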